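/- arXiv:1505.06245 — 2 statements merged into one kernel-verified Lean document; each statement's English description precedes it below -/
import Mathlib

section
/- If f and g are α-differentiable at x > 0 and g(x) ≠ 0, then f/g is α-differentiable at x and T_α(f/g)(x) = (g(x)·T_α f(x) − f(x)·T_α g(x))/g(x)². -/
open Filter Topology Real

/-- `f` has conformable fractional derivative `L` of order `α` at `x`:
`T_α f(x) = lim_{ε→0} (f(x + ε·x^(1−α)) − f(x))/ε`. -/
def HasConfDerivAt (α : ℝ) (f : ℝ → ℝ) (L x : ℝ) : Prop :=
  Tendsto (fun ε : ℝ => (f (x + ε * x ^ (1 - α)) - f x) / ε) (𝓝[≠] 0) (𝓝 L)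

theorem hasConfDerivAt_iff_hasDerivAt {α : ℝ} {f : ℝ → ℝ} {L x : ℝ} :
    HasConfDerivAt α f L x ↔ HasDerivAt (fun ε => f (x + ε * x ^ (1 - α))) L 0 := by
  simp only [hasDerivAt_iff_tendsto_slope_zero, zero_add, zero_mul, add_zero, smul_eq_mul,
    inv_mul_eq_div, HasConfDerivAt]

theorem conf_deriv_div_general (α x F G : ℝ) (f g : ℝ → ℝ) (hgx : g x ≠ 0)
    (hf : HasConfDerivAt α f F x) (hg : HasConfDerivAt α g G x) :
    HasConfDerivAt α (fun t => f t / g t) ((g x * F - f x * G) / (g x) ^ 2) x := by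
  rw [hasConfDerivAt_iff_hasDerivAt] at *
  have hgx' : g (x + 0 * x ^ (1 - α)) ≠ 0 := by rwa [zero_mul, add_zero]
  refine (hf.fun_div hg hgx').congr_deriv ?_
  rw [zero_mul, add_zero]
  ring

theorem conf_deriv_div (α x F G : ℝ) (f g : ℝ → ℝ) (hα : 0 < α) (hα1 : α ≤ 1)
    (hx : 0 < x) (hgx : g x ≠ 0)
    (hf : HasConfDerivAt α f F x) (hg : HasConfDerivAt α g G x) :
    HasConfDerivAt α (fun t => f t / g t) ((g x * F - f x * G) / (g x) ^ 2) x :=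
  conf_deriv_div_general α x F G f g hgx hf hg
end

section
/- Let α ∈ (0,1], p₀, q₀ ∈ ℝ, and s ∈ ℝ. The function y(x) = (x − x₀)^(sα) satisfies the Euler-type conformable equation (x − x₀)^(2α)·T_α^{x₀}T_α^{x₀}y + p₀·(x − x₀)^α·T_α^{x₀}y + q₀·y = 0 for all x > x₀ if and only if s satisfies the indicial equation α²·s(s−1) + α·s·p₀ + q₀ = 0. -/
open Filter Topology Real

/-- Left conformable fractional derivative of order `α` based at `x₀`:
`(T_α^{x₀} f)(x) = lim_{ε→0} (f(x + ε(x−x₀)^(1−α)) − f(x))/ε`. -/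
def HasConfDerivAtBase (x₀ α : ℝ) (f : ℝ → ℝ) (L x : ℝ) : Prop :=
  Tendsto (fun ε : ℝ => (f (x + ε * (x - x₀) ^ (1 - α)) - f x) / ε) (𝓝[≠] 0) (𝓝 L)

/-! For `x > x₀` the conformable derivative of a differentiable `f` is `(x - x₀)^(1-α) f'(x)`, so
`T_α (t - x₀)^β = β (t - x₀)^(β-α)`: the operator `(x - x₀)^α T_α` acts on `(x - x₀)^(sα)` as
multiplication by `sα`. The second derivative is computed the same way, because `T_α y` agrees
with `sα (t - x₀)^(sα-α)` on the open set `t > x₀`. Hence the Euler-type expression equals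
`(x - x₀)^(sα)` times the indicial polynomial; at `x = x₀ + 1` that factor is `1`. -/

namespace HasConfDerivAtBase

variable {x₀ α : ℝ} {f g : ℝ → ℝ} {L L' x : ℝ}

theorem unique (hL : HasConfDerivAtBase x₀ α f L x) (hL' : HasConfDerivAtBase x₀ α f L' x) :
    L = L' :=
  tendsto_nhds_unique hL hL'

theorem congr_of_eventuallyEq (h : HasConfDerivAtBase x₀ α f L x) (hfg : f =ᶠ[𝓝 x] g) :
    HasConfDerivAtBase x₀ α g L x := by
  have hshift : Tendsto (fun ε : ℝ => x + ε * (x - x₀) ^ (1 - α)) (𝓝[≠] 0) (𝓝 x) := by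
    have hcont : Continuous (fun ε : ℝ => x + ε * (x - x₀) ^ (1 - α)) := by fun_prop
    simpa using (hcont.tendsto 0).mono_left nhdsWithin_le_nhds
  refine Tendsto.congr' ?_ h
  filter_upwards [hshift.eventually hfg] with ε hε
  rw [hε, hfg.eq_of_nhds]

end HasConfDerivAtBase

theorem HasDerivAt.hasConfDerivAtBase {f : ℝ → ℝ} {f' x : ℝ} (x₀ α : ℝ) (hf : HasDerivAt f f' x) :
    HasConfDerivAtBase x₀ α f (f' * (x - x₀) ^ (1 - α)) x := by
  set c := (x - x₀) ^ (1 - α)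
  have hshift : HasDerivAt (fun ε : ℝ => x + ε * c) c 0 := by
    simpa using ((hasDerivAt_id (0 : ℝ)).mul_const c).const_add x
  have hcomp : HasDerivAt (fun ε : ℝ => f (x + ε * c)) (f' * c) 0 := by
    have hf₀ : HasDerivAt f f' (x + 0 * c) := by simpa using hf
    simpa [Function.comp_def] using hf₀.comp 0 hshift
  refine (hasDerivAt_iff_tendsto_slope.mp hcomp).congr fun ε => ?_
  simp [slope_def_field, c]

theorem hasConfDerivAtBase_const_mul_rpow_sub {x₀ x : ℝ} (α c β : ℝ) (hx : x₀ < x) :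
    HasConfDerivAtBase x₀ α (fun t => c * (t - x₀) ^ β) (c * β * (x - x₀) ^ (β - α)) x := by
  have hpos : 0 < x - x₀ := sub_pos.mpr hx
  have hderiv : HasDerivAt (fun t => c * (t - x₀) ^ β) (c * (β * (x - x₀) ^ (β - 1))) x := by
    simpa [Function.comp_def] using
      ((hasDerivAt_rpow_const (p := β) (Or.inl hpos.ne')).comp x
        ((hasDerivAt_id x).sub_const x₀)).const_mul c
  convert hderiv.hasConfDerivAtBase x₀ α using 1
  have hexp : (x - x₀) ^ (β - 1) * (x - x₀) ^ (1 - α) = (x - x₀) ^ (β - α) := by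
    rw [← rpow_add hpos]; ring_nf
  linear_combination (-c * β) * hexp

theorem euler_expression_eq_rpow_mul_indicial {u : ℝ} (hu : 0 < u) (α s p₀ q₀ : ℝ) :
    u ^ (2 * α) * (s * α * (s * α - α) * u ^ (s * α - α - α))
        + p₀ * u ^ α * (s * α * u ^ (s * α - α)) + q₀ * u ^ (s * α)
      = u ^ (s * α) * (α ^ 2 * s * (s - 1) + α * s * p₀ + q₀) := by
  have h₂ : u ^ (2 * α) * u ^ (s * α - α - α) = u ^ (s * α) := by
    rw [← rpow_add hu]; ring_nf
  have h₁ : u ^ α * u ^ (s * α - α) = u ^ (s * α) := by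
    rw [← rpow_add hu]; ring_nf
  linear_combination (s * α * (s * α - α)) * h₂ + (p₀ * s * α) * h₁

theorem euler_conf_equation_iff_indicial_general (x₀ α s p₀ q₀ : ℝ)
    (Ty TTy : ℝ → ℝ)
    (hTy : ∀ x, x₀ < x →
      HasConfDerivAtBase x₀ α (fun t => (t - x₀) ^ (s * α)) (Ty x) x)
    (hTTy : ∀ x, x₀ < x → HasConfDerivAtBase x₀ α Ty (TTy x) x) :
    (∀ x, x₀ < x →
        (x - x₀) ^ (2 * α) * TTy x + p₀ * (x - x₀) ^ α * Ty x
          + q₀ * (x - x₀) ^ (s * α) = 0) ↔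
      α ^ 2 * s * (s - 1) + α * s * p₀ + q₀ = 0 := by
  have hTy_eq : ∀ x, x₀ < x → Ty x = s * α * (x - x₀) ^ (s * α - α) := fun x hx =>
    (hTy x hx).unique (by simpa using hasConfDerivAtBase_const_mul_rpow_sub α 1 (s * α) hx)
  have hTTy_eq : ∀ x, x₀ < x →
      TTy x = s * α * (s * α - α) * (x - x₀) ^ (s * α - α - α) := fun x hx =>
    ((hTTy x hx).congr_of_eventuallyEq (eventuallyEq_of_mem (Ioi_mem_nhds hx) hTy_eq)).unique
      (hasConfDerivAtBase_const_mul_rpow_sub α (s * α) (s * α - α) hx)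
  have hfactor : ∀ x, x₀ < x →
      (x - x₀) ^ (2 * α) * TTy x + p₀ * (x - x₀) ^ α * Ty x + q₀ * (x - x₀) ^ (s * α)
        = (x - x₀) ^ (s * α) * (α ^ 2 * s * (s - 1) + α * s * p₀ + q₀) := fun x hx => by
    rw [hTy_eq x hx, hTTy_eq x hx]
    exact euler_expression_eq_rpow_mul_indicial (sub_pos.mpr hx) α s p₀ q₀
  constructor
  · intro h
    have h₁ := h (x₀ + 1) (lt_add_one x₀)
    rwa [hfactor (x₀ + 1) (lt_add_one x₀), add_sub_cancel_left, one_rpow, one_mul] at h₁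
  · intro h x hx
    rw [hfactor x hx, h, mul_zero]

theorem euler_conf_equation_iff_indicial (x₀ α s p₀ q₀ : ℝ) (hα : 0 < α) (hα1 : α ≤ 1)
    (Ty TTy : ℝ → ℝ)
    (hTy : ∀ x, x₀ < x →
      HasConfDerivAtBase x₀ α (fun t => (t - x₀) ^ (s * α)) (Ty x) x)
    (hTTy : ∀ x, x₀ < x → HasConfDerivAtBase x₀ α Ty (TTy x) x) :
    (∀ x, x₀ < x →
        (x - x₀) ^ (2 * α) * TTy x + p₀ * (x - x₀) ^ α * Ty x
          + q₀ * (x - x₀) ^ (s * α) = 0) ↔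
      α ^ 2 * s * (s - 1) + α * s * p₀ + q₀ = 0 :=
  euler_conf_equation_iff_indicial_general x₀ α s p₀ q₀ Ty TTy hTy hTTy
end
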